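/- Let T > 0, let (Ω, 𝒜, ℙ) be a probability space with a filtration (ℱ_s)_{s∈[0,T]}, and let ξ : [0,T] × Ω → ℝ^m be a stochastic process. Suppose that for every k ∈ ℕ there exists a process η^k : [0,T] × Ω → ℝ^m that is progressively measurable with respect to (ℱ_s)_{s∈[0,T]} and satisfies ℙ{ ω : |ξ_s(ω) − η^k_s(ω)| ≥ 2^{−k} } ≤ 2^{−k} for every s ∈ [0,T]. Then ξ admits a progressively measurable version: there exists a process η : [0,T] × Ω → ℝ^m, progressively measurable with respect to (ℱ_s)_{s∈[0,T]}, such that for every s ∈ [0,T] one has η_s = ξ_s ℙ-almost surely. -/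

import Mathlib

open MeasureTheory Set Filter

/-- A process `χ` on `[a,T] × Ω` is progressively measurable w.r.t. the filtration `ℱ` if
for every `t ∈ [a,T]` the map `(s,ω) ↦ χ s ω`, restricted to `[a,t] × Ω`, is measurable
with respect to the product σ-algebra `Borel([a,t]) ⊗ ℱ t`. -/
def ProgMeasurableOn {Ω E : Type*} [MeasurableSpace E]
    (ℱ : ℝ → MeasurableSpace Ω) (a T : ℝ) (χ : ℝ → Ω → E) : Prop :=
  ∀ t ∈ Set.Icc a T,
    Measurable[(inferInstance : MeasurableSpace (Set.Icc a t)).prod (ℱ t)]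
      fun p : Set.Icc a t × Ω => χ (p.1 : ℝ) p.2

/-! Pass to the pointwise limit `η = lim ηᵏ`, taken with `limUnder` so that it is defined
everywhere: progressive measurability survives pointwise limits in a Polish space, and for each
fixed `s` Borel–Cantelli applied to the summable bounds `2⁻ᵏ` gives `ηᵏ_s → ξ_s` almost surely. -/

open Topology ENNReal

theorem ProgMeasurableOn.limUnder {Ω E : Type*} [TopologicalSpace E] [PolishSpace E]
    [MeasurableSpace E] [BorelSpace E] [Nonempty E] {ℱ : ℝ → MeasurableSpace Ω} {a T : ℝ}
    {χ : ℕ → ℝ → Ω → E} (hχ : ∀ k, ProgMeasurableOn ℱ a T (χ k)) :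
    ProgMeasurableOn ℱ a T fun s ω => limUnder atTop (χ · s ω) := fun t ht =>
  letI := (inferInstance : MeasurableSpace (Set.Icc a t)).prod (ℱ t)
  (StronglyMeasurable.limUnder fun k => (hχ k t ht).stronglyMeasurable).measurable

theorem ae_tendsto_of_tsum_measure_le_dist_ne_top {Ω E : Type*} [MeasurableSpace Ω]
    [PseudoMetricSpace E] {μ : Measure Ω} {f : ℕ → Ω → E} {g : Ω → E} {ε : ℕ → ℝ}
    (hε : Tendsto ε atTop (𝓝 0))
    (hsum : ∑' k, μ {ω | ε k ≤ dist (g ω) (f k ω)} ≠ ∞) :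
    ∀ᵐ ω ∂μ, Tendsto (f · ω) atTop (𝓝 (g ω)) := by
  filter_upwards [ae_eventually_notMem hsum] with ω hω
  refine tendsto_iff_dist_tendsto_zero.2 (squeeze_zero' (.of_forall fun _ => dist_nonneg) ?_ hε)
  filter_upwards [hω] with k hk
  rw [dist_comm]
  exact (not_le.1 hk).le

theorem progressive_version_of_approximation_general
    {Ω : Type*} [MeasurableSpace Ω] (ℙ : Measure Ω)
    {m : ℕ} (T : ℝ)
    (ℱ : ℝ → MeasurableSpace Ω)
    (ξ : ℝ → Ω → EuclideanSpace ℝ (Fin m))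
    (happrox : ∀ k : ℕ, ∃ η : ℝ → Ω → EuclideanSpace ℝ (Fin m),
      ProgMeasurableOn ℱ 0 T η ∧
      ∀ s ∈ Set.Icc (0 : ℝ) T,
        ℙ {ω | (2 : ℝ)⁻¹ ^ k ≤ ‖ξ s ω - η s ω‖} ≤ 2⁻¹ ^ k) :
    ∃ η : ℝ → Ω → EuclideanSpace ℝ (Fin m),
      ProgMeasurableOn ℱ 0 T η ∧
      ∀ s ∈ Set.Icc (0 : ℝ) T, ∀ᵐ ω ∂ℙ, η s ω = ξ s ω := by
  choose η hη_prog hη_close using happrox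
  refine ⟨fun s ω => limUnder atTop (η · s ω), ProgMeasurableOn.limUnder hη_prog, fun s hs => ?_⟩
  have hsum : ∑' k, ℙ {ω | (2 : ℝ)⁻¹ ^ k ≤ dist (ξ s ω) (η k s ω)} ≠ ∞ := by
    refine ne_top_of_le_ne_top (b := ∑' k : ℕ, 2⁻¹ ^ k) (by simp [ENNReal.tsum_geometric])
      (ENNReal.tsum_le_tsum fun k => ?_)
    simpa only [dist_eq_norm] using hη_close k s hs
  filter_upwards [ae_tendsto_of_tsum_measure_le_dist_ne_top
    (tendsto_pow_atTop_nhds_zero_of_lt_one (by norm_num) (by norm_num)) hsum] with ω hω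
  exact hω.limUnder_eq

/-- Borel–Cantelli selection step of Lemma 2.1: if a process `ξ` on `[0,T]` can, for every
`k`, be approximated by a progressively measurable process `η^k` with
`ℙ{|ξ_s − η^k_s| ≥ 2⁻ᵏ} ≤ 2⁻ᵏ` for all `s ∈ [0,T]`, then `ξ` has a progressively
measurable version. -/
theorem progressive_version_of_approximation
    {Ω : Type*} [MeasurableSpace Ω] (ℙ : Measure Ω) [IsProbabilityMeasure ℙ]
    {m : ℕ} (T : ℝ) (hT : 0 < T)
    (ℱ : ℝ → MeasurableSpace Ω)
    (hℱ_le : ∀ s : ℝ, ℱ s ≤ ‹MeasurableSpace Ω›)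
    (hℱ_mono : ∀ s t : ℝ, s ≤ t → ℱ s ≤ ℱ t)
    (ξ : ℝ → Ω → EuclideanSpace ℝ (Fin m))
    (happrox : ∀ k : ℕ, ∃ η : ℝ → Ω → EuclideanSpace ℝ (Fin m),
      ProgMeasurableOn ℱ 0 T η ∧
      ∀ s ∈ Set.Icc (0 : ℝ) T,
        ℙ {ω | (2 : ℝ)⁻¹ ^ k ≤ ‖ξ s ω - η s ω‖} ≤ 2⁻¹ ^ k) :
    ∃ η : ℝ → Ω → EuclideanSpace ℝ (Fin m),
      ProgMeasurableOn ℱ 0 T η ∧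
      ∀ s ∈ Set.Icc (0 : ℝ) T, ∀ᵐ ω ∂ℙ, η s ω = ξ s ω :=
  progressive_version_of_approximation_general ℙ T ℱ ξ happrox
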